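/- arXiv:math/0402437 — 5 statements merged into one kernel-verified Lean document; each statement's English description precedes it below -/
import Mathlib

section
/- Let ∇̌ be the constrained connection associated with a connection ∇ on a Lie algebroid E and a projector P : E → D. For sections σ, η of D, the symmetric product of ∇̌ satisfies ⟨σ : η⟩ˇ = P(⟨σ : η⟩), where ⟨· : ·⟩ is the symmetric product of ∇. -/
/-!
STATEMENT 6.  (Algebraic model of a Lie algebroid and a linear connection.)
For the constrained connection `∇̌_σ η = P(∇_σ η) + ∇_σ(Qη)` associated with
a connection `∇` and a projector `P : E → D` (`D = range P`, `Q = I − P`),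
and for sections `σ, η` of `D`, the symmetric product of `∇̌` satisfies
`⟨σ : η⟩ˇ = P(⟨σ : η⟩)`.
-/

structure LieAlgebroid (R : Type*) (Sec : Type*) [CommRing R] [Algebra ℝ R]
    [LieRing Sec] [Module R Sec] where
  anchor : Sec → Derivation ℝ R R
  anchor_add : ∀ σ₁ σ₂ : Sec, anchor (σ₁ + σ₂) = anchor σ₁ + anchor σ₂
  anchor_smul : ∀ (F : R) (σ : Sec), anchor (F • σ) = F • anchor σ
  leibniz : ∀ (σ₁ σ₂ : Sec) (F : R),
    ⁅σ₁, F • σ₂⁆ = F • ⁅σ₁, σ₂⁆ + (anchor σ₁ F) • σ₂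

/-- A linear `E`-connection on a Lie algebroid. -/
structure LAConnection {R Sec : Type*} [CommRing R] [Algebra ℝ R]
    [LieRing Sec] [Module R Sec] (L : LieAlgebroid R Sec) where
  cov : Sec → Sec → Sec
  cov_add_left : ∀ σ₁ σ₂ η, cov (σ₁ + σ₂) η = cov σ₁ η + cov σ₂ η
  cov_smul_left : ∀ (F : R) σ η, cov (F • σ) η = F • cov σ η
  cov_add_right : ∀ σ η₁ η₂, cov σ (η₁ + η₂) = cov σ η₁ + cov σ η₂
  cov_leibniz : ∀ σ (F : R) η, cov σ (F • η) = (L.anchor σ F) • η + F • cov σ η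

theorem constrained_symmetricProduct_on_D
    {R Sec : Type*} [CommRing R] [Algebra ℝ R]
    [LieRing Sec] [Module R Sec] (L : LieAlgebroid R Sec)
    (D : LAConnection L) (P : Sec →ₗ[R] Sec) (hP : ∀ σ, P (P σ) = P σ)
    (σ η : Sec) (hσ : σ ∈ LinearMap.range P) (hη : η ∈ LinearMap.range P) :
    let ccov : Sec → Sec → Sec := fun σ η => P (D.cov σ η) + D.cov σ (η - P η)
    ccov σ η + ccov η σ = P (D.cov σ η + D.cov η σ) := by
  intro ccov
  obtain ⟨σ', rfl⟩ := hσ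
  obtain ⟨η', rfl⟩ := hη
  have h0 : ∀ τ : Sec, D.cov τ 0 = 0 := by
    intro τ
    have := D.cov_add_right τ 0 0
    simpa using this.symm
  simp only [ccov, hP, sub_self, h0, add_zero, map_add]
end

section
/- Let ∇̌ be the constrained connection associated with ∇ and projector P : E → D, with Q = I − P. For sections σ, η of D, the torsion of ∇̌ satisfies Ť(σ,η) = P(T(σ,η)) − Q([σ,η]), where T is the torsion of ∇. -/
theorem constrained_torsion_on_D
    {R Sec : Type*} [CommRing R] [Algebra ℝ R]
    [LieRing Sec] [Module R Sec] (L : LieAlgebroid R Sec)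
    (D : LAConnection L) (P : Sec →ₗ[R] Sec) (hP : ∀ σ, P (P σ) = P σ)
    (σ η : Sec) (hσ : σ ∈ LinearMap.range P) (hη : η ∈ LinearMap.range P) :
    let ccov : Sec → Sec → Sec := fun σ η => P (D.cov σ η) + D.cov σ (η - P η)
    let T : Sec → Sec → Sec := fun σ η => D.cov σ η - D.cov η σ - ⁅σ, η⁆
    ccov σ η - ccov η σ - ⁅σ, η⁆ = P (T σ η) - (⁅σ, η⁆ - P ⁅σ, η⁆) := by
  intro ccov T
  obtain ⟨a, rfl⟩ := hσ
  obtain ⟨b, rfl⟩ := hη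
  have hz : ∀ x : Sec, D.cov x 0 = 0 := by
    intro x
    have := D.cov_add_right x 0 0
    simpa using this.symm
  simp only [ccov, T, hP, sub_self, hz, add_zero, map_sub]
  abel
end

section
/- Let Γ be a spray on a Lie algebroid E (a SODE section of the prolongation T^E E that is homogeneous of degree 1). For sections σ, η of E, the bracket [σ^V,[Γ,η^V]] in T^E E is the vertical lift of a section of E, denoted ⟨σ : η⟩_Γ, and the resulting operation ⟨· : ·⟩_Γ is symmetric and satisfies ⟨σ : Fη⟩_Γ = (ρ(σ)F)η + F⟨σ : η⟩_Γ for all F ∈ C^∞(M). -/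
set_option maxHeartbeats 1000000
set_option synthInstance.maxHeartbeats 400000


/-!
STATEMENT 12.  Concrete (coordinate) model of a Lie algebroid `E → M` and its
prolongation `T^E E` (see the definitions below: anchor `rho`, structure
functions `Cstr`, prolongation bracket `pbrkt`, Liouville section, vertical
lifts).  A SODE section `Γ` satisfies `(Γ a)₁ = y` at `a = (x,y)`; it is a
spray if moreover `[Δ,Γ] = Γ` (homogeneous of degree 1).  The theorem: there
is an operation `⟨· : ·⟩_Γ` on sections of `E` such that for all smooth
sections `σ, η` the bracket `[σ^V,[Γ,η^V]]` is the vertical lift of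
`⟨σ : η⟩_Γ`; this operation is symmetric and satisfies
`⟨σ : Fη⟩_Γ = (ρ(σ)F)η + F⟨σ : η⟩_Γ` for all smooth `F ∈ C^∞(M)`.
-/

noncomputable section

/-- Points of the base manifold `M` (in coordinates). -/
abbrev Base (n : ℕ) := Fin n → ℝ
/-- Elements of a fiber of the vector bundle `E → M` (in a local basis). -/
abbrev Fib (l : ℕ) := Fin l → ℝ
/-- Sections of `E → M` in coordinates. -/
abbrev Sec (n l : ℕ) := Base n → Fib l
/-- Points of the manifold `E` in coordinates `(x, y)`. -/
abbrev EPt (n l : ℕ) := Base n × Fib l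
/-- Sections of the prolongation `T^E E → E` in the induced local basis
`{𝒳_α, 𝒱_α}`: a section `Z = Z^α 𝒳_α + V^α 𝒱_α` is recorded through its
component functions `a ↦ ((Z^α a), (V^α a))`. -/
abbrev PSec (n l : ℕ) := EPt n l → Fib l × Fib l

variable {n l : ℕ}

/-- The anchor `ρ¹` of the prolongation `T^E E`, applied to a section `Z`:
the resulting vector field on `E` at `a = (x,y)` has components
`(ρ(x)Z₁(a), Z₂(a))`. -/
def rhoOne (rho : Base n → (Fib l →ₗ[ℝ] Base n)) (Z : PSec n l) (a : EPt n l) :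
    Base n × Fib l :=
  (rho a.1 ((Z a).1), (Z a).2)

/-- The Lie algebroid bracket of sections of the prolongation `T^E E`, written
in coordinates using the anchor `ρ` and the structure functions `C` of `E`:
`[Z,W]₁ = ρ¹(Z)·W₁ − ρ¹(W)·Z₁ + C(Z₁,W₁)`, `[Z,W]₂ = ρ¹(Z)·W₂ − ρ¹(W)·Z₂`. -/
def pbrkt (rho : Base n → (Fib l →ₗ[ℝ] Base n))
    (Cstr : Base n → (Fib l →ₗ[ℝ] Fib l →ₗ[ℝ] Fib l))
    (Z W : PSec n l) : PSec n l := fun a =>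
  (fderiv ℝ (fun b => (W b).1) a (rhoOne rho Z a)
     - fderiv ℝ (fun b => (Z b).1) a (rhoOne rho W a)
     + Cstr a.1 ((Z a).1) ((W a).1),
   fderiv ℝ (fun b => (W b).2) a (rhoOne rho Z a)
     - fderiv ℝ (fun b => (Z b).2) a (rhoOne rho W a))

/-- The Liouville section `Δ` of the prolongation: `Δ = y^α 𝒱_α`. -/
def LiouvilleSec : PSec n l := fun a => (0, a.2)

/-- The vertical lift `σ^V = σ^α 𝒱_α` of a section `σ` of `E`. -/
def vlift (σ : Sec n l) : PSec n l := fun a => (0, σ a.1)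

/-- second component of Γ -/
def Gm (Γ : PSec n l) : EPt n l → Fib l := fun a => (Γ a).2

theorem euler_rel (rho : Base n → (Fib l →ₗ[ℝ] Base n))
    (Cstr : Base n → (Fib l →ₗ[ℝ] Fib l →ₗ[ℝ] Fib l))
    (Γ : PSec n l) (hsode : ∀ a : EPt n l, (Γ a).1 = a.2)
    (hspray : pbrkt rho Cstr LiouvilleSec Γ = Γ) :
    ∀ a : EPt n l, fderiv ℝ (Gm Γ) a ((0 : Base n), a.2) = Gm Γ a + Gm Γ a := by
  intro a
  have h := congrArg (fun Z : PSec n l => (Z a).2) hspray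
  simp only [pbrkt, rhoOne, LiouvilleSec, Gm] at h ⊢
  have h1 : (fun b : EPt n l => b.2) = (Prod.snd : EPt n l → Fib l) := rfl
  rw [h1, fderiv_snd] at h
  simp only [map_zero, ContinuousLinearMap.coe_snd'] at h
  show fderiv ℝ (fun b => (Γ b).2) a ((0 : Base n), a.2) = (Γ a).2 + (Γ a).2
  exact eq_add_of_sub_eq h

section Helpers
variable {P Q Y : Type*} [NormedAddCommGroup P] [NormedSpace ℝ P]
  [NormedAddCommGroup Q] [NormedSpace ℝ Q] [NormedAddCommGroup Y] [NormedSpace ℝ Y]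

theorem fderiv_dir {f : P → Y} {a v : P} (hf : DifferentiableAt ℝ f a) {c : Y}
    (h : HasDerivAt (fun t : ℝ => f (a + t • v)) c 0) : fderiv ℝ f a v = c := by
  have hγ : HasDerivAt (fun t : ℝ => a + t • v) v 0 := by
    simpa using ((hasDerivAt_id (0:ℝ)).smul_const v).const_add a
  have hf' : HasFDerivAt f (fderiv ℝ f a) (a + (0:ℝ) • v) := by
    simpa using hf.hasFDerivAt
  exact ((hf'.comp_hasDerivAt 0 hγ).unique h)

theorem diff_eval {c : P → Q →L[ℝ] Y} {a : P} (hc : DifferentiableAt ℝ c a) (z : Q) :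
    DifferentiableAt ℝ (fun b => c b z) a :=
  (ContinuousLinearMap.apply ℝ Y z).differentiableAt.comp a hc

theorem fderiv_eval {c : P → Q →L[ℝ] Y} {a : P} (hc : DifferentiableAt ℝ c a) (z : Q)
    (w : P) : fderiv ℝ (fun b => c b z) a w = fderiv ℝ c a w z := by
  rw [fderiv_clm_apply hc (differentiableAt_const z)]
  simp

theorem fderiv_eval2 {R : Type*} [NormedAddCommGroup R] [NormedSpace ℝ R]
    {c : P → Q →L[ℝ] R →L[ℝ] Y} {a : P} (hc : DifferentiableAt ℝ c a) (z₁ : Q) (z₂ : R)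
    (w : P) : fderiv ℝ (fun b => c b z₁ z₂) a w = fderiv ℝ c a w z₁ z₂ := by
  rw [fderiv_eval (diff_eval hc z₁) z₂ w, fderiv_eval hc z₁ w]

theorem diff_fst_comp {g : P → Y} {a : P × Q} (hg : DifferentiableAt ℝ g a.1) :
    DifferentiableAt ℝ (fun b : P × Q => g b.1) a :=
  hg.comp a differentiableAt_fst

theorem fderiv_fst_comp {g : P → Y} {a : P × Q} (hg : DifferentiableAt ℝ g a.1)
    (w : P × Q) : fderiv ℝ (fun b : P × Q => g b.1) a w = fderiv ℝ g a.1 w.1 := by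
  have : (fun b : P × Q => g b.1) = g ∘ Prod.fst := rfl
  rw [this, fderiv_comp a hg differentiableAt_fst, fderiv_fst]
  rfl

theorem fderiv_vert (a : P × Q) (w : P × Q) :
    fderiv ℝ (fun b : P × Q => ((0:P), b.2)) a w = ((0:P), w.2) := by
  have hL : (fun b : P × Q => ((0:P), b.2)) =
      ⇑((0 : (P × Q) →L[ℝ] P).prod (ContinuousLinearMap.snd ℝ P Q)) := rfl
  rw [hL, ContinuousLinearMap.fderiv]
  rfl

theorem diff_vert (a : P × Q) : DifferentiableAt ℝ (fun b : P × Q => ((0:P), b.2)) a := by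
  have hL : (fun b : P × Q => ((0:P), b.2)) =
      ⇑((0 : (P × Q) →L[ℝ] P).prod (ContinuousLinearMap.snd ℝ P Q)) := rfl
  rw [hL]; exact (ContinuousLinearMap.differentiableAt _)

end Helpers

theorem vert_hess {n l : ℕ} {G : EPt n l → Fib l} (hG : ContDiff ℝ (⊤ : ℕ∞) G)
    (heuler : ∀ a : EPt n l, fderiv ℝ G a ((0 : Base n), a.2) = G a + G a) :
    ∀ (a : EPt n l) (u v : Fib l),
      fderiv ℝ (fderiv ℝ G) a ((0:Base n), u) ((0:Base n), v)
        = fderiv ℝ (fderiv ℝ G) (a.1, (0:Fib l)) ((0:Base n), u) ((0:Base n), v) := by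
  have hDG : ContDiff ℝ (⊤ : ℕ∞) (fderiv ℝ G) := hG.fderiv_right (m := (⊤ : ℕ∞)) (by simp)
  have hD2G : ContDiff ℝ (⊤ : ℕ∞) (fderiv ℝ (fderiv ℝ G)) := hDG.fderiv_right (m := (⊤ : ℕ∞)) (by simp)
  letI : NormedAddCommGroup (EPt n l →L[ℝ] EPt n l →L[ℝ] Fib l) := inferInstance
  letI : NormedSpace ℝ (EPt n l →L[ℝ] EPt n l →L[ℝ] Fib l) := inferInstance
  have hD3G : ContDiff ℝ (⊤ : ℕ∞) (fderiv ℝ (fderiv ℝ (fderiv ℝ G))) :=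
    hD2G.fderiv_right (m := (⊤ : ℕ∞)) (by simp)
  have dG : Differentiable ℝ G := hG.differentiable (by simp)
  have dDG : Differentiable ℝ (fderiv ℝ G) := hDG.differentiable (by simp)
  have dD2G : Differentiable ℝ (fderiv ℝ (fderiv ℝ G)) := hD2G.differentiable (by simp)
  have hsymm : ∀ (a : EPt n l) (z₁ z₂ : EPt n l),
      fderiv ℝ (fderiv ℝ G) a z₁ z₂ = fderiv ℝ (fderiv ℝ G) a z₂ z₁ :=
    fun a z₁ z₂ => second_derivative_symmetric (fun y => (dG y).hasFDerivAt)
      (dDG a).hasFDerivAt z₁ z₂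
  have hsymm12 : ∀ (a : EPt n l) (z₁ z₂ z₃ : EPt n l),
      fderiv ℝ (fderiv ℝ (fderiv ℝ G)) a z₁ z₂ z₃
        = fderiv ℝ (fderiv ℝ (fderiv ℝ G)) a z₂ z₁ z₃ := by
    intro a z₁ z₂ z₃
    rw [second_derivative_symmetric (f := fderiv ℝ G) (fun y => (dDG y).hasFDerivAt)
      (dD2G a).hasFDerivAt z₁ z₂]
  have hsymm23 : ∀ (a : EPt n l) (z₁ z₂ z₃ : EPt n l),
      fderiv ℝ (fderiv ℝ (fderiv ℝ G)) a z₁ z₂ z₃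
        = fderiv ℝ (fderiv ℝ (fderiv ℝ G)) a z₁ z₃ z₂ := by
    intro a z₁ z₂ z₃
    have hfun : (fun b => fderiv ℝ (fderiv ℝ G) b z₂ z₃)
        = (fun b => fderiv ℝ (fderiv ℝ G) b z₃ z₂) :=
      funext fun b => hsymm b z₂ z₃
    calc fderiv ℝ (fderiv ℝ (fderiv ℝ G)) a z₁ z₂ z₃
        = fderiv ℝ (fun b => fderiv ℝ (fderiv ℝ G) b z₂ z₃) a z₁ :=
          (fderiv_eval2 (dD2G a) z₂ z₃ z₁).symm
      _ = fderiv ℝ (fun b => fderiv ℝ (fderiv ℝ G) b z₃ z₂) a z₁ := by rw [hfun]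
      _ = fderiv ℝ (fderiv ℝ (fderiv ℝ G)) a z₁ z₃ z₂ := fderiv_eval2 (dD2G a) z₃ z₂ z₁
  have I1 : ∀ (a : EPt n l) (v : Fib l),
      fderiv ℝ (fderiv ℝ G) a ((0:Base n), v) ((0:Base n), a.2)
        = fderiv ℝ G a ((0:Base n), v) := by
    intro a v
    have hfun : (fun b : EPt n l => fderiv ℝ G b ((0:Base n), b.2)) = fun b => G b + G b :=
      funext heuler
    have e1 : fderiv ℝ (fun b : EPt n l => fderiv ℝ G b ((0:Base n), b.2)) a ((0:Base n), v)
        = fderiv ℝ G a ((0:Base n), v)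
          + fderiv ℝ (fderiv ℝ G) a ((0:Base n), v) ((0:Base n), a.2) := by
      rw [fderiv_clm_apply (dDG a) (diff_vert a)]
      simp [fderiv_vert]
    have e2 : fderiv ℝ (fun b : EPt n l => G b + G b) a ((0:Base n), v)
        = fderiv ℝ G a ((0:Base n), v) + fderiv ℝ G a ((0:Base n), v) := by
      rw [show (fun b : EPt n l => G b + G b) = G + G from rfl, fderiv_add (dG a) (dG a)]
      simp
    have := e1.symm.trans ((by rw [hfun] :
      fderiv ℝ (fun b : EPt n l => fderiv ℝ G b ((0:Base n), b.2)) a ((0:Base n), v)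
        = fderiv ℝ (fun b : EPt n l => G b + G b) a ((0:Base n), v)).trans e2)
    exact add_left_cancel this
  have Z : ∀ (a : EPt n l) (v w : Fib l),
      fderiv ℝ (fderiv ℝ (fderiv ℝ G)) a ((0:Base n), w) ((0:Base n), v) ((0:Base n), a.2)
        = 0 := by
    intro a v w
    have hfun : (fun b : EPt n l => fderiv ℝ (fderiv ℝ G) b ((0:Base n), v) ((0:Base n), b.2))
        = fun b => fderiv ℝ G b ((0:Base n), v) := funext fun b => I1 b v
    have e1 : fderiv ℝ (fun b : EPt n l =>
          fderiv ℝ (fderiv ℝ G) b ((0:Base n), v) ((0:Base n), b.2)) a ((0:Base n), w)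
        = fderiv ℝ (fderiv ℝ G) a ((0:Base n), v) ((0:Base n), w)
          + fderiv ℝ (fderiv ℝ (fderiv ℝ G)) a
              ((0:Base n), w) ((0:Base n), v) ((0:Base n), a.2) := by
      rw [fderiv_clm_apply (diff_eval (dD2G a) ((0:Base n), v)) (diff_vert a)]
      simp [fderiv_vert, fderiv_eval (dD2G a) ((0:Base n), v)]
    have e2 : fderiv ℝ (fun b : EPt n l => fderiv ℝ G b ((0:Base n), v)) a ((0:Base n), w)
        = fderiv ℝ (fderiv ℝ G) a ((0:Base n), w) ((0:Base n), v) := fderiv_eval (dDG a) _ _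
    have e3 := e1.symm.trans ((by rw [hfun] :
      fderiv ℝ (fun b : EPt n l =>
          fderiv ℝ (fderiv ℝ G) b ((0:Base n), v) ((0:Base n), b.2)) a ((0:Base n), w)
        = fderiv ℝ (fun b : EPt n l => fderiv ℝ G b ((0:Base n), v)) a ((0:Base n), w)).trans e2)
    have h2 : fderiv ℝ (fderiv ℝ G) a ((0:Base n), v) ((0:Base n), w)
          + fderiv ℝ (fderiv ℝ (fderiv ℝ G)) a
              ((0:Base n), w) ((0:Base n), v) ((0:Base n), a.2)
        = fderiv ℝ (fderiv ℝ G) a ((0:Base n), v) ((0:Base n), w) + 0 := by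
      rw [e3, hsymm a ((0:Base n), w) ((0:Base n), v), add_zero]
    exact add_left_cancel h2
  intro a u v
  obtain ⟨x, y⟩ := a
  have hγ : ∀ t : ℝ, HasDerivAt (fun s : ℝ => ((x : Base n), s • y)) ((0:Base n), y) t := by
    intro t
    exact HasDerivAt.prodMk (hasDerivAt_const t x) (by simpa using (hasDerivAt_id t).smul_const y)
  have hc2 : ∀ b : EPt n l, DifferentiableAt ℝ
      (fun b => fderiv ℝ (fderiv ℝ G) b ((0:Base n), u) ((0:Base n), v)) b :=
    fun b => diff_eval (diff_eval (dD2G b) ((0:Base n), u)) ((0:Base n), v)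
  have hψ : ∀ t : ℝ, HasDerivAt
      (fun t : ℝ => fderiv ℝ (fderiv ℝ G) ((x:Base n), t • y) ((0:Base n), u) ((0:Base n), v))
      (fderiv ℝ (fderiv ℝ (fderiv ℝ G)) ((x:Base n), t • y)
        ((0:Base n), y) ((0:Base n), u) ((0:Base n), v)) t := by
    intro t
    have h1 := (hc2 ((x:Base n), t • y)).hasFDerivAt.comp_hasDerivAt t (hγ t)
    rwa [fderiv_eval2 (dD2G _) ((0:Base n), u) ((0:Base n), v) ((0:Base n), y)] at h1
  have hg0 : ∀ t : ℝ, fderiv ℝ (fderiv ℝ (fderiv ℝ G)) ((x:Base n), t • y)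
      ((0:Base n), y) ((0:Base n), u) ((0:Base n), v) = 0 := by
    have hne : ∀ t : ℝ, t ≠ 0 → fderiv ℝ (fderiv ℝ (fderiv ℝ G)) ((x:Base n), t • y)
        ((0:Base n), y) ((0:Base n), u) ((0:Base n), v) = 0 := by
      intro t ht
      have hz := Z ((x:Base n), t • y) v u
      have h0 : (((0:Base n), t • y) : EPt n l) = t • (((0:Base n), y) : EPt n l) := by
        simp [Prod.smul_def]
      rw [show ((((x:Base n), t • y) : EPt n l)).2 = t • y from rfl] at hz
      rw [h0, map_smul, smul_eq_zero] at hz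
      have hz' : fderiv ℝ (fderiv ℝ (fderiv ℝ G)) ((x:Base n), t • y)
          ((0:Base n), u) ((0:Base n), v) ((0:Base n), y) = 0 := by
        rcases hz with h | h
        · exact absurd h ht
        · exact h
      rw [hsymm12 _ ((0:Base n), y) ((0:Base n), u),
        hsymm23 _ ((0:Base n), u) ((0:Base n), y) ((0:Base n), v)]
      exact hz'
    have hcont : Continuous (fun t : ℝ => fderiv ℝ (fderiv ℝ (fderiv ℝ G)) ((x:Base n), t • y)
        ((0:Base n), y) ((0:Base n), u) ((0:Base n), v)) := by
      have c3 : Continuous (fderiv ℝ (fderiv ℝ (fderiv ℝ G))) := hD3G.continuous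
      have cγ : Continuous (fun t : ℝ => (((x:Base n), t • y) : EPt n l)) := by fun_prop
      exact (ContinuousLinearMap.apply ℝ (Fib l) (((0:Base n), v) : EPt n l)).continuous.comp
        ((ContinuousLinearMap.apply ℝ (EPt n l →L[ℝ] Fib l)
            (((0:Base n), u) : EPt n l)).continuous.comp
          ((ContinuousLinearMap.apply ℝ (EPt n l →L[ℝ] EPt n l →L[ℝ] Fib l)
              (((0:Base n), y) : EPt n l)).continuous.comp (c3.comp cγ)))
    intro t
    have := Continuous.ext_on (dense_compl_singleton (0:ℝ)) hcont continuous_const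
      (fun s hs => hne s hs)
    exact congrFun this t
  have hconst := is_const_of_deriv_eq_zero (𝕜 := ℝ)
    (fun t => (hψ t).differentiableAt)
    (fun t => by rw [(hψ t).deriv]; exact hg0 t) 1 0
  simpa using hconst

theorem spray_symmetricProduct
    {n l : ℕ} (rho : Base n → (Fib l →ₗ[ℝ] Base n))
    (Cstr : Base n → (Fib l →ₗ[ℝ] Fib l →ₗ[ℝ] Fib l))
    (hrho : ContDiff ℝ (⊤ : ℕ∞) (fun p : Base n × Fib l => rho p.1 p.2))
    (hC : ContDiff ℝ (⊤ : ℕ∞) (fun p : Base n × Fib l × Fib l => Cstr p.1 p.2.1 p.2.2))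
    (Γ : PSec n l)
    (hΓ : ContDiff ℝ (⊤ : ℕ∞) Γ)
    -- `Γ` is a SODE section:
    (hsode : ∀ a : EPt n l, (Γ a).1 = a.2)
    -- `Γ` is homogeneous of degree 1, i.e. a spray:
    (hspray : pbrkt rho Cstr LiouvilleSec Γ = Γ) :
    ∃ sp : Sec n l → Sec n l → Sec n l,
      (∀ σ η : Sec n l, ContDiff ℝ (⊤ : ℕ∞) σ → ContDiff ℝ (⊤ : ℕ∞) η →
        pbrkt rho Cstr (vlift σ) (pbrkt rho Cstr Γ (vlift η)) = vlift (sp σ η)) ∧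
      (∀ σ η : Sec n l, ContDiff ℝ (⊤ : ℕ∞) σ → ContDiff ℝ (⊤ : ℕ∞) η → sp σ η = sp η σ) ∧
      (∀ (σ η : Sec n l) (F : Base n → ℝ), ContDiff ℝ (⊤ : ℕ∞) σ → ContDiff ℝ (⊤ : ℕ∞) η →
        ContDiff ℝ (⊤ : ℕ∞) F →
        sp σ (fun x => F x • η x) =
          fun x => (fderiv ℝ F x (rho x (σ x))) • η x + F x • sp σ η x) := by
  have hG : ContDiff ℝ (⊤ : ℕ∞) (fun a : EPt n l => (Γ a).2) := contDiff_snd.comp hΓ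
  have dG : Differentiable ℝ (fun a : EPt n l => (Γ a).2) := hG.differentiable (by simp)
  have hDG : ContDiff ℝ (⊤ : ℕ∞) (fderiv ℝ (fun a : EPt n l => (Γ a).2)) :=
    hG.fderiv_right (m := (⊤ : ℕ∞)) (by simp)
  have dDG : Differentiable ℝ (fderiv ℝ (fun a : EPt n l => (Γ a).2)) :=
    hDG.differentiable (by simp)
  have drho : Differentiable ℝ (fun p : EPt n l => rho p.1 p.2) := hrho.differentiable (by simp)
  have heuler := euler_rel rho Cstr Γ hsode hspray
  have hK := vert_hess (G := fun a : EPt n l => (Γ a).2) hG (by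
    intro a
    have := heuler a
    exact this)
  have hsymmG : ∀ (b : EPt n l) (z₁ z₂ : EPt n l),
      fderiv ℝ (fderiv ℝ (fun a : EPt n l => (Γ a).2)) b z₁ z₂
        = fderiv ℝ (fderiv ℝ (fun a : EPt n l => (Γ a).2)) b z₂ z₁ :=
    fun b z₁ z₂ => second_derivative_symmetric (fun y => (dG y).hasFDerivAt)
      (dDG b).hasFDerivAt z₁ z₂
  have hrd : ∀ (a : EPt n l) (v : Fib l),
      fderiv ℝ (fun b : EPt n l => rho b.1 b.2) a ((0:Base n), v) = rho a.1 v := by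
    intro a v
    apply fderiv_dir (drho a)
    have he : (fun t : ℝ => (fun b : EPt n l => rho b.1 b.2)
          (a + t • (((0:Base n), v) : EPt n l)))
        = fun t : ℝ => rho a.1 a.2 + t • rho a.1 v := by
      funext t
      show rho (a.1 + t • (0:Base n)) (a.2 + t • v) = _
      simp [map_add, map_smul]
    rw [he]
    simpa using ((hasDerivAt_id (0:ℝ)).smul_const (rho a.1 v)).const_add (rho a.1 a.2)
  refine ⟨fun σ η x => fderiv ℝ η x (rho x (σ x)) + fderiv ℝ σ x (rho x (η x))
      - fderiv ℝ (fderiv ℝ (fun a : EPt n l => (Γ a).2)) (x, (0:Fib l))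
          ((0:Base n), σ x) ((0:Base n), η x), ?_, ?_, ?_⟩
  · -- main bracket computation
    intro σ η hσ hη
    have dσ : Differentiable ℝ σ := hσ.differentiable (by simp)
    have dη : Differentiable ℝ η := hη.differentiable (by simp)
    have dDη : Differentiable ℝ (fderiv ℝ η) :=
      (hη.fderiv_right (m := (⊤ : ℕ∞)) (by simp)).differentiable (by simp)
    -- step 1 : the inner bracket
    have hW : pbrkt rho Cstr Γ (vlift η) = fun a => (-η a.1,
        fderiv ℝ η a.1 (rho a.1 a.2)
          - fderiv ℝ (fun b : EPt n l => (Γ b).2) a ((0:Base n), η a.1)) := by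
      funext a
      have h1 : (fun b : EPt n l => (Γ b).1) = Prod.snd := funext hsode
      have h2 : (fun b : EPt n l => (vlift η b).1) = fun _ => (0 : Fib l) := rfl
      have h3 : (fun b : EPt n l => (vlift η b).2) = fun b : EPt n l => η b.1 := rfl
      simp only [pbrkt, rhoOne, vlift, h1, h2, h3, fderiv_snd, fderiv_const]
      rw [fderiv_fst_comp (dη a.1)]
      simp [hsode a]
    rw [hW]
    funext a
    show _ = (((0:Fib l), _) : Fib l × Fib l)
    have dA : DifferentiableAt ℝ (fun b : EPt n l => fderiv ℝ η b.1 (rho b.1 b.2)) a :=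
      (diff_fst_comp (dDη a.1)).clm_apply (drho a)
    have dB : DifferentiableAt ℝ
        (fun b : EPt n l => fderiv ℝ (fun c : EPt n l => (Γ c).2) b ((0:Base n), η b.1)) a :=
      (dDG a).clm_apply (diff_fst_comp (g := fun x : Base n => ((0:Base n), η x)) (DifferentiableAt.prodMk (differentiableAt_const _) (dη a.1)))
    have hA : fderiv ℝ (fun b : EPt n l => fderiv ℝ η b.1 (rho b.1 b.2)) a
        ((0:Base n), σ a.1) = fderiv ℝ η a.1 (rho a.1 (σ a.1)) := by
      rw [fderiv_clm_apply (diff_fst_comp (dDη a.1)) (drho a)]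
      rw [ContinuousLinearMap.add_apply, ContinuousLinearMap.comp_apply,
        ContinuousLinearMap.flip_apply]
      rw [hrd a (σ a.1), fderiv_fst_comp (dDη a.1)]
      simp
    have hB : fderiv ℝ (fun b : EPt n l =>
          fderiv ℝ (fun c : EPt n l => (Γ c).2) b ((0:Base n), η b.1)) a ((0:Base n), σ a.1)
        = fderiv ℝ (fderiv ℝ (fun c : EPt n l => (Γ c).2)) a
            ((0:Base n), σ a.1) ((0:Base n), η a.1) := by
      rw [fderiv_clm_apply (dDG a) (diff_fst_comp (DifferentiableAt.prodMk (differentiableAt_const _) (dη a.1)))]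
      rw [ContinuousLinearMap.add_apply, ContinuousLinearMap.comp_apply,
        ContinuousLinearMap.flip_apply]
      rw [fderiv_fst_comp (g := fun x : Base n => ((0:Base n), η x)) (DifferentiableAt.prodMk (differentiableAt_const _) (dη a.1))]
      simp
    apply Prod.ext
    · simp only [pbrkt, rhoOne, vlift, map_zero, fderiv_const]
      simp [fderiv_neg, fderiv_fst_comp (dη a.1)]
    · simp only [pbrkt, rhoOne, vlift, map_zero]
      rw [fderiv_fun_sub dA dB, ContinuousLinearMap.sub_apply, hA, hB,
        fderiv_fst_comp (dσ a.1)]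
      simp only [map_neg]
      rw [hK a (σ a.1) (η a.1)]
      abel
  · intro σ η hσ hη
    funext x
    show fderiv ℝ η x (rho x (σ x)) + fderiv ℝ σ x (rho x (η x))
        - fderiv ℝ (fderiv ℝ (fun a : EPt n l => (Γ a).2)) (x, (0:Fib l))
            ((0:Base n), σ x) ((0:Base n), η x)
      = fderiv ℝ σ x (rho x (η x)) + fderiv ℝ η x (rho x (σ x))
        - fderiv ℝ (fderiv ℝ (fun a : EPt n l => (Γ a).2)) (x, (0:Fib l))
            ((0:Base n), η x) ((0:Base n), σ x)
    rw [hsymmG (x, (0:Fib l)) ((0:Base n), σ x) ((0:Base n), η x)]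
    abel
  · intro σ η F hσ hη hF
    funext x
    have dη : Differentiable ℝ η := hη.differentiable (by simp)
    have dF : Differentiable ℝ F := hF.differentiable (by simp)
    show fderiv ℝ (fun y => F y • η y) x (rho x (σ x))
        + fderiv ℝ σ x (rho x (F x • η x))
        - fderiv ℝ (fderiv ℝ (fun a : EPt n l => (Γ a).2)) (x, (0:Fib l))
            ((0:Base n), σ x) ((0:Base n), F x • η x)
      = fderiv ℝ F x (rho x (σ x)) • η x
        + F x • (fderiv ℝ η x (rho x (σ x)) + fderiv ℝ σ x (rho x (η x))
          - fderiv ℝ (fderiv ℝ (fun a : EPt n l => (Γ a).2)) (x, (0:Fib l))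
              ((0:Base n), σ x) ((0:Base n), η x))
    rw [show (fun y => F y • η y) = F • η from rfl, fderiv_smul (dF x) (dη x)]
    have h0 : (((0:Base n), F x • η x) : EPt n l) = F x • (((0:Base n), η x) : EPt n l) := by
      ext <;> simp
    have hms : fderiv ℝ (fderiv ℝ (fun a : EPt n l => (Γ a).2)) (x, (0:Fib l))
          ((0:Base n), σ x) ((0:Base n), F x • η x)
        = F x • fderiv ℝ (fderiv ℝ (fun a : EPt n l => (Γ a).2)) (x, (0:Fib l))
          ((0:Base n), σ x) ((0:Base n), η x) := by
      rw [h0, map_smul]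
    rw [hms]
    simp only [map_smul, smul_sub, smul_add, ContinuousLinearMap.add_apply,
      ContinuousLinearMap.coe_smul', Pi.smul_apply, ContinuousLinearMap.smulRight_apply]
    abel

end
end

section
/- Let ∇ be a linear connection on a Lie algebroid E. A subbundle D ⊂ E is geodesically invariant for ∇ (every geodesic starting in D stays in D) if and only if D is closed under the symmetric product: ⟨σ : η⟩ = ∇_σ η + ∇_η σ is a section of D for all sections σ, η of D. -/
/-!
STATEMENT 14.  Concrete (coordinate) model of a Lie algebroid `E → M` with
anchor `rho x : Fib l → Base n`, and a linear connection `∇` given by its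
connection coefficients `Cc x : Fib l × Fib l → Fib l` (bilinear):
`(∇_σ η)(x) = (Dη)_x(ρ(x)σ(x)) + Cc x (σ x) (η x)`, with symmetric product
`⟨σ : η⟩ = ∇_σ η + ∇_η σ`.  An admissible curve `(x(t), y(t))`
(`ẋ = ρ(x)y`) is a geodesic when `ẏ + Cc x y y = 0`.  A subbundle `D`
(written, in an adapted local basis, as a fixed subspace of the fiber) is
geodesically invariant iff every geodesic starting in `D` stays in `D`.
The theorem: `D` is geodesically invariant iff `D` is closed under the
symmetric product, i.e. `⟨σ : η⟩` is a section of `D` for all (smooth)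
sections `σ, η` of `D`.
-/

noncomputable section

open Set Filter Topology

/-- If a curve with values in a (finite-dimensional, hence closed) submodule `D`
starts at `0` and has a derivative at `0` (one-sidedly approached through `(0, δ]`),
then that derivative lies in `D`. -/
lemma aux_deriv_mem_of_mem {l : ℕ} (D : Submodule ℝ (Fib l)) {g : ℝ → Fib l} {L : Fib l} {δ : ℝ}
    (hδ : 0 < δ) (hg : HasDerivAt g L 0) (hg0 : g 0 = 0)
    (hmem : ∀ t ∈ Set.Ioc (0:ℝ) δ, g t ∈ D) : L ∈ D := by
  have hclosed : IsClosed (D : Set (Fib l)) := Submodule.closed_of_finiteDimensional D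
  have hW : HasDerivWithinAt g L (Set.Ioi 0) 0 := hg.hasDerivWithinAt
  have hslope := hasDerivWithinAt_iff_tendsto_slope.mp hW
  have hdiff : Set.Ioi (0:ℝ) \ {0} = Set.Ioi 0 := by
    apply Set.diff_singleton_eq_self
    simp
  rw [hdiff] at hslope
  have hev : ∀ᶠ t in 𝓝[>] (0:ℝ), slope g 0 t ∈ D := by
    filter_upwards [Ioc_mem_nhdsGT hδ] with t ht
    rw [slope_def_module, hg0]
    exact D.smul_mem _ (by simpa using D.sub_mem (hmem t ht) D.zero_mem)
  exact hclosed.mem_of_tendsto hslope hev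

theorem geodesically_invariant_iff_symmetric_product_closed
    {n l : ℕ} (rho : Base n → (Fib l →ₗ[ℝ] Base n))
    (Cc : Base n → (Fib l →ₗ[ℝ] Fib l →ₗ[ℝ] Fib l))
    (hrho : ContDiff ℝ (⊤ : ℕ∞) (fun p : Base n × Fib l => rho p.1 p.2))
    (hCc : ContDiff ℝ (⊤ : ℕ∞) (fun p : Base n × Fib l × Fib l => Cc p.1 p.2.1 p.2.2))
    (D : Submodule ℝ (Fib l)) :
    -- covariant derivative of sections, in coordinates:
    let cov : (Base n → Fib l) → (Base n → Fib l) → (Base n → Fib l) :=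
      fun σ η x => fderiv ℝ η x (rho x (σ x)) + Cc x (σ x) (η x)
    -- `D` is geodesically invariant …
    (∀ (x : ℝ → Base n) (y : ℝ → Fib l) (t₀ t₁ : ℝ), t₀ ≤ t₁ →
      (∀ t ∈ Set.Icc t₀ t₁, HasDerivAt x (rho (x t) (y t)) t) →
      (∀ t ∈ Set.Icc t₀ t₁, HasDerivAt y (-(Cc (x t) (y t) (y t))) t) →
      y t₀ ∈ D → ∀ t ∈ Set.Icc t₀ t₁, y t ∈ D)
    ↔
    -- … iff `D` is closed under the symmetric product:
    (∀ σ η : Base n → Fib l, ContDiff ℝ (⊤ : ℕ∞) σ → ContDiff ℝ (⊤ : ℕ∞) η →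
      (∀ x, σ x ∈ D) → (∀ x, η x ∈ D) →
      ∀ x, cov σ η x + cov η σ x ∈ D) := by
  intro cov
  have covdef : cov = fun σ η x => fderiv ℝ η x (rho x (σ x)) + Cc x (σ x) (η x) := rfl
  constructor
  · -- geodesic invariance → closure under symmetric product
    intro hinv
    have key : ∀ ξ : Base n → Fib l, ContDiff ℝ (⊤ : ℕ∞) ξ → (∀ x, ξ x ∈ D) →
        ∀ x₀, cov ξ ξ x₀ ∈ D := by
      intro ξ hξ hξD x₀
      set V : Base n × Fib l → Base n × Fib l :=
        fun p => (rho p.1 p.2, -(Cc p.1 p.2 p.2)) with hVdef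
      have hV : ContDiff ℝ 1 V := by
        apply ContDiff.prodMk
        · exact hrho.of_le (by simp)
        · have h3 : ContDiff ℝ (⊤ : ℕ∞) (fun p : Base n × Fib l => (p.1, p.2, p.2)) :=
            contDiff_fst.prodMk (contDiff_snd.prodMk contDiff_snd)
          exact ((hCc.comp h3).neg).of_le (by simp)
      obtain ⟨f, hf0, ε, hε, hf⟩ :=
        ContDiffAt.exists_forall_mem_closedBall_exists_eq_forall_mem_Ioo_hasDerivAt₀ (x₀ := (x₀, ξ x₀)) hV.contDiffAt (0:ℝ)
      set X : ℝ → Base n := fun t => (f t).1 with hXdef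
      set Y : ℝ → Fib l := fun t => (f t).2 with hYdef
      have hX0 : X 0 = x₀ := by rw [hXdef]; simp [hf0]
      have hY0 : Y 0 = ξ x₀ := by rw [hYdef]; simp [hf0]
      have hsub : Set.Icc (0:ℝ) (ε/2) ⊆ Set.Ioo (0 - ε) (0 + ε) := by
        intro t ht
        constructor <;> [linarith [ht.1]; linarith [ht.2]]
      have hXd : ∀ t ∈ Set.Icc (0:ℝ) (ε/2), HasDerivAt X (rho (X t) (Y t)) t := by
        intro t ht
        exact ((ContinuousLinearMap.fst ℝ (Base n) (Fib l)).hasFDerivAt).comp_hasDerivAt t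
          (hf t (hsub ht))
      have hYd : ∀ t ∈ Set.Icc (0:ℝ) (ε/2), HasDerivAt Y (-(Cc (X t) (Y t) (Y t))) t := by
        intro t ht
        exact ((ContinuousLinearMap.snd ℝ (Base n) (Fib l)).hasFDerivAt).comp_hasDerivAt t
          (hf t (hsub ht))
      have hYD : ∀ t ∈ Set.Icc (0:ℝ) (ε/2), Y t ∈ D := by
        apply hinv X Y 0 (ε/2) (by linarith) hXd hYd
        rw [hY0]; exact hξD x₀
      -- now consider g t = Y t - ξ (X t)
      have hξdiff : DifferentiableAt ℝ ξ x₀ := (hξ.differentiable (by simp)).differentiableAt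
      have hX0d : HasDerivAt X (rho x₀ (ξ x₀)) 0 := by
        have := hXd 0 (Set.mem_Icc.mpr ⟨le_refl 0, by linarith⟩)
        rwa [hX0, hY0] at this
      have hξdiff' : HasFDerivAt ξ (fderiv ℝ ξ x₀) (X 0) := by
        rw [hX0]; exact hξdiff.hasFDerivAt
      have hcomp : HasDerivAt (fun t => ξ (X t)) (fderiv ℝ ξ x₀ (rho x₀ (ξ x₀))) 0 :=
        hξdiff'.comp_hasDerivAt 0 hX0d
      have hY0d : HasDerivAt Y (-(Cc x₀ (ξ x₀) (ξ x₀))) 0 := by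
        have := hYd 0 (Set.mem_Icc.mpr ⟨le_refl 0, by linarith⟩)
        rwa [hX0, hY0] at this
      have hg : HasDerivAt (fun t => Y t - ξ (X t))
          (-(Cc x₀ (ξ x₀) (ξ x₀)) - fderiv ℝ ξ x₀ (rho x₀ (ξ x₀))) 0 := hY0d.sub hcomp
      have hg0 : Y 0 - ξ (X 0) = 0 := by rw [hX0, hY0, sub_self]
      have hmem : ∀ t ∈ Set.Ioc (0:ℝ) (ε/2), Y t - ξ (X t) ∈ D := fun t ht =>
        D.sub_mem (hYD t ⟨le_of_lt ht.1, ht.2⟩) (hξD (X t))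
      have hL : -(Cc x₀ (ξ x₀) (ξ x₀)) - fderiv ℝ ξ x₀ (rho x₀ (ξ x₀)) ∈ D :=
        aux_deriv_mem_of_mem D (by linarith) hg hg0 hmem
      have : cov ξ ξ x₀ = -(-(Cc x₀ (ξ x₀) (ξ x₀)) - fderiv ℝ ξ x₀ (rho x₀ (ξ x₀))) := by
        rw [covdef]; abel
      rw [this]
      exact D.neg_mem hL
    intro σ η hσ hη hσD hηD x₀
    have h1 := key σ hσ hσD x₀
    have h2 := key η hη hηD x₀
    have h3 := key (fun x => σ x + η x) (hσ.add hη) (fun x => D.add_mem (hσD x) (hηD x)) x₀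
    have hdσ : DifferentiableAt ℝ σ x₀ := (hσ.differentiable (by simp)).differentiableAt
    have hdη : DifferentiableAt ℝ η x₀ := (hη.differentiable (by simp)).differentiableAt
    have hexp : cov σ η x₀ + cov η σ x₀ =
        cov (fun x => σ x + η x) (fun x => σ x + η x) x₀ - cov σ σ x₀ - cov η η x₀ := by
      rw [covdef]
      simp only [fderiv_fun_add hdσ hdη, map_add, ContinuousLinearMap.add_apply,
        LinearMap.add_apply]
      abel
    rw [hexp]
    exact D.sub_mem (D.sub_mem h3 h1) h2
  · -- closure under symmetric product → geodesic invariance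
    intro hcl x y t₀ t₁ ht₀₁ hx hy hy0
    -- from closure with constant sections: Cc p u u ∈ D for u ∈ D
    have hCcDD : ∀ p : Base n, ∀ u ∈ D, Cc p u u ∈ D := by
      intro p u hu
      have h := hcl (fun _ => u) (fun _ => u) contDiff_const contDiff_const
        (fun _ => hu) (fun _ => hu) p
      rw [covdef] at h
      simp only [fderiv_fun_const, Pi.zero_apply, ContinuousLinearMap.zero_apply, zero_add] at h
      have h2 := D.smul_mem (2⁻¹ : ℝ) h
      rwa [show (2⁻¹ : ℝ) • (Cc p u u + Cc p u u) = Cc p u u from by module] at h2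
    -- choose a complement and projection
    obtain ⟨Dc, hcompl⟩ := Submodule.exists_isCompl D
    set Pl : Fib l →ₗ[ℝ] Fib l := D.subtype.comp (Submodule.linearProjOfIsCompl D Dc hcompl)
      with hPldef
    set Plc : Fib l →L[ℝ] Fib l := LinearMap.toContinuousLinearMap Pl with hPlcdef
    have hPlapp : ∀ w, Plc w = Pl w := fun w => rfl
    have hPl_mem : ∀ w, Plc w ∈ D := fun w => (Submodule.linearProjOfIsCompl D Dc hcompl w).2
    have hPl_id : ∀ w ∈ D, Plc w = w := by
      intro w hw
      have := Submodule.linearProjOfIsCompl_apply_left hcompl ⟨w, hw⟩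
      rw [hPlapp, hPldef]
      exact congrArg (Submodule.subtype D) this
    set z : ℝ → Fib l := fun t => y t - Plc (y t) with hzdef
    have hz0 : z t₀ = 0 := by rw [hzdef]; simp [hPl_id _ hy0]
    -- continuity of x and y on the interval
    have hxc : ContinuousOn x (Set.Icc t₀ t₁) := fun t ht =>
      (hx t ht).continuousAt.continuousWithinAt
    have hyc : ContinuousOn y (Set.Icc t₀ t₁) := fun t ht =>
      (hy t ht).continuousAt.continuousWithinAt
    have hzc : ContinuousOn z (Set.Icc t₀ t₁) :=
      hyc.sub (Plc.continuous.comp_continuousOn hyc)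
    -- derivative of z
    set Qc : Fib l →L[ℝ] Fib l := ContinuousLinearMap.id ℝ (Fib l) - Plc with hQcdef
    have hQapp : ∀ w, Qc w = w - Plc w := fun w => rfl
    have hQD : ∀ w ∈ D, Qc w = 0 := by
      intro w hw; rw [hQapp, hPl_id w hw, sub_self]
    have hzeq : ∀ t, z t = Qc (y t) := fun t => rfl
    have hzd : ∀ t ∈ Set.Icc t₀ t₁, HasDerivAt z (Qc (-(Cc (x t) (y t) (y t)))) t := by
      intro t ht
      exact (Qc.hasFDerivAt).comp_hasDerivAt t (hy t ht)
    -- the linear map governing z'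
    set A : ℝ → (Fib l →ₗ[ℝ] Fib l) := fun t =>
      Qc.toLinearMap.comp ((Cc (x t) (y t)) + (Cc (x t)).flip (Plc (y t))) with hAdef
    have hform : ∀ t, Qc (-(Cc (x t) (y t) (y t))) = -(A t (z t)) := by
      intro t
      have hyd : y t = Plc (y t) + z t := by
        show y t = Plc (y t) + (y t - Plc (y t)); abel
      have hsplit : Cc (x t) (y t) (y t) =
          Cc (x t) (Plc (y t)) (Plc (y t)) + (Cc (x t) (y t) (z t) + Cc (x t) (z t) (Plc (y t))) := by
        conv_lhs => rw [show Cc (x t) (y t) (y t)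
          = Cc (x t) (y t) (Plc (y t) + z t) from by rw [← hyd]]
        rw [map_add]
        conv_lhs => rw [show Cc (x t) (y t) (Plc (y t))
          = Cc (x t) (Plc (y t) + z t) (Plc (y t)) from by rw [← hyd]]
        rw [map_add, LinearMap.add_apply]
        abel
      rw [map_neg, hsplit, map_add, hQD _ (hCcDD (x t) _ (hPl_mem (y t))), zero_add]
      rw [hAdef]
      simp [LinearMap.comp_apply, LinearMap.add_apply, LinearMap.flip_apply]
    -- continuity and bound of A applied to basis vectors
    set e : Fin l → Fib l := fun i => fun j => if i = j then (1:ℝ) else 0 with hedef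
    have hbasis : ∀ w : Fib l, w = ∑ i, w i • e i := fun w => pi_eq_sum_univ w
    have hAcont : ∀ i : Fin l, ContinuousOn (fun t => A t (e i)) (Set.Icc t₀ t₁) := by
      intro i
      have hCccont : Continuous (fun p : Base n × Fib l × Fib l => Cc p.1 p.2.1 p.2.2) :=
        hCc.continuous
      have h1 : ContinuousOn (fun t => Cc (x t) (y t) (e i)) (Set.Icc t₀ t₁) :=
        hCccont.comp_continuousOn (hxc.prodMk (hyc.prodMk continuousOn_const))
      have h2 : ContinuousOn (fun t => Cc (x t) (e i) (Plc (y t))) (Set.Icc t₀ t₁) :=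
        hCccont.comp_continuousOn
          (hxc.prodMk (continuousOn_const.prodMk (Plc.continuous.comp_continuousOn hyc)))
      have : ContinuousOn (fun t => Qc (Cc (x t) (y t) (e i) + Cc (x t) (e i) (Plc (y t))))
          (Set.Icc t₀ t₁) := Qc.continuous.comp_continuousOn (h1.add h2)
      exact this
    have hbound : ∀ i : Fin l, ∃ C : ℝ, ∀ t ∈ Set.Icc t₀ t₁, ‖A t (e i)‖ ≤ C := by
      intro i
      obtain ⟨C, hC⟩ := (isCompact_Icc (a := t₀) (b := t₁)).exists_bound_of_continuousOn (hAcont i)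
      exact ⟨C, hC⟩
    choose K hK using hbound
    set Ktot : ℝ := ∑ i, K i with hKdef
    have hAbound : ∀ t ∈ Set.Icc t₀ t₁, ∀ w : Fib l, ‖A t w‖ ≤ Ktot * ‖w‖ := by
      intro t ht w
      have hexp : A t w = ∑ i, w i • A t (e i) := by
        conv_lhs => rw [hbasis w, map_sum]
        simp [map_smul]
      rw [hexp]
      calc ‖∑ i, w i • A t (e i)‖ ≤ ∑ i, ‖w i • A t (e i)‖ := norm_sum_le _ _
        _ ≤ ∑ i, ‖w‖ * K i := by
            apply Finset.sum_le_sum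
            intro i _
            rw [norm_smul]
            exact mul_le_mul (norm_le_pi_norm w i) (hK i t ht) (norm_nonneg _) (norm_nonneg _)
        _ = Ktot * ‖w‖ := by rw [hKdef, Finset.sum_mul]; ring_nf
    -- Gronwall
    have hgron := norm_le_gronwallBound_of_norm_deriv_right_le (δ := 0) (K := Ktot) (ε := 0)
      (f := z) (f' := fun t => Qc (-(Cc (x t) (y t) (y t)))) (a := t₀) (b := t₁)
      hzc
      (fun t ht => (hzd t ⟨ht.1, le_of_lt ht.2⟩).hasDerivWithinAt)
      (by rw [hz0]; simp)
      (by
        intro t ht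
        show ‖Qc (-(Cc (x t) (y t) (y t)))‖ ≤ Ktot * ‖z t‖ + 0
        rw [hform t, norm_neg, add_zero]
        exact hAbound t ⟨ht.1, le_of_lt ht.2⟩ (z t))
    intro t htt
    have := hgron t htt
    rw [gronwallBound_ε0_δ0] at this
    have hz : z t = 0 := by
      have := norm_le_zero_iff.mp this
      exact this
    have : y t = Plc (y t) := by
      have heq : y t - Plc (y t) = 0 := hz
      linear_combination (norm := module) heq
    rw [this]
    exact hPl_mem (y t)

end
end

section
/- Let ∇ be a connection on a Lie algebroid E with constrained connection ∇̌ defined by a projector P : E → D. Then D is geodesically invariant for ∇̌. -/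
/-!
STATEMENT 15.  Concrete (coordinate) model of a Lie algebroid `E → M`, with a
linear connection `∇` given by its connection coefficients
`Cc x : Fib l × Fib l → Fib l`, a subbundle `D` given (in an adapted local
basis) as the range of a linear projector `P` on the fiber, and the
constrained connection `∇̌_σ η = P(∇_σ η) + ∇_σ(Qη)` (`Q = I − P`), whose
connection coefficients are `Čc x u v = P(Cc x u v) + Cc x u (v − Pv)`.
The theorem: `D` is geodesically invariant for `∇̌`, i.e. every geodesic of
`∇̌` (an admissible curve `(x(t),y(t))` with `ẋ = ρ(x)y` and
`ẏ + Čc x y y = 0`) starting in `D` remains in `D`.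
-/

noncomputable section

theorem constrained_connection_geodesically_invariant
    {n l : ℕ} (rho : Base n → (Fib l →ₗ[ℝ] Base n))
    (Cc : Base n → (Fib l →ₗ[ℝ] Fib l →ₗ[ℝ] Fib l))
    (hrho : ContDiff ℝ (⊤ : ℕ∞) (fun p : Base n × Fib l => rho p.1 p.2))
    (hCc : ContDiff ℝ (⊤ : ℕ∞) (fun p : Base n × Fib l × Fib l => Cc p.1 p.2.1 p.2.2))
    (P : Fib l →ₗ[ℝ] Fib l) (hP : ∀ v, P (P v) = P v) :
    -- the connection coefficients of the constrained connection `∇̌` :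
    let Cck : Base n → Fib l → Fib l → Fib l :=
      fun x u v => P (Cc x u v) + Cc x u (v - P v)
    -- every geodesic of `∇̌` starting in `D = range P` remains in `D` :
    ∀ (x : ℝ → Base n) (y : ℝ → Fib l) (t₀ t₁ : ℝ), t₀ ≤ t₁ →
      (∀ t ∈ Set.Icc t₀ t₁, HasDerivAt x (rho (x t) (y t)) t) →
      (∀ t ∈ Set.Icc t₀ t₁, HasDerivAt y (-(Cck (x t) (y t) (y t))) t) →
      y t₀ ∈ LinearMap.range P →
      ∀ t ∈ Set.Icc t₀ t₁, y t ∈ LinearMap.range P := by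
  intro Cck x y t₀ t₁ ht01 hx' hy' hy0 t ht
  -- the clamping map onto `[t₀, t₁]`
  set π : ℝ → ℝ := fun s => max t₀ (min s t₁) with hπdef
  have hπmem : ∀ s, π s ∈ Set.Icc t₀ t₁ := fun s =>
    ⟨le_max_left _ _, max_le ht01 (min_le_right _ _)⟩
  have hπid : ∀ s ∈ Set.Icc t₀ t₁, π s = s := by
    intro s hs
    simp only [hπdef]
    rw [min_eq_left hs.2, max_eq_right hs.1]
  have hπcont : Continuous π := continuous_const.max (continuous_id.min continuous_const)
  -- `x ∘ π` and `y ∘ π` are continuous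
  have hxc : Continuous (fun s => x (π s)) := by
    rw [continuous_iff_continuousAt]
    intro s
    exact ((hx' _ (hπmem s)).continuousAt).comp hπcont.continuousAt
  have hyc : Continuous (fun s => y (π s)) := by
    rw [continuous_iff_continuousAt]
    intro s
    exact ((hy' _ (hπmem s)).continuousAt).comp hπcont.continuousAt
  -- the (time-dependent) linear field governing `z = y - P y`
  set Q : Fib l →ₗ[ℝ] Fib l := LinearMap.id - P with hQdef
  set A : ℝ → (Fib l →L[ℝ] Fib l) := fun s =>
    LinearMap.toContinuousLinearMap (Q ∘ₗ (Cc (x (π s)) (y (π s)))) with hAdef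
  have hAapp : ∀ s w, A s w = Cc (x (π s)) (y (π s)) w - P (Cc (x (π s)) (y (π s)) w) := by
    intro s w
    simp [hAdef, hQdef]
  have hAcont : Continuous A := by
    rw [continuous_clm_apply]
    intro w
    have : Continuous fun s => Cc (x (π s)) (y (π s)) w := by
      have := hCc.continuous.comp (f := fun s => (x (π s), y (π s), w))
        (hxc.prodMk (hyc.prodMk continuous_const))
      exact this
    simp only [hAapp]
    exact this.sub ((LinearMap.continuous_of_finiteDimensional P).comp this)
  -- a uniform bound for `‖A s‖`
  obtain ⟨s₀, hs₀, hs₀max'⟩ :=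
    isCompact_Icc.exists_isMaxOn (Set.nonempty_Icc.2 ht01)
      ((continuous_norm.comp hAcont).continuousOn (s := Set.Icc t₀ t₁))
  have hs₀max : ∀ s ∈ Set.Icc t₀ t₁, ‖A s‖ ≤ ‖A s₀‖ := fun s hs => hs₀max' hs
  have hAπ : ∀ s, A s = A (π s) := by
    intro s
    have : π (π s) = π s := hπid _ (hπmem s)
    simp only [hAdef, this]
  have hAbound : ∀ s, ‖A s‖₊ ≤ ‖A s₀‖₊ := by
    intro s
    rw [← NNReal.coe_le_coe]
    calc (‖A s‖₊ : ℝ) = ‖A (π s)‖ := by rw [hAπ s]; rfl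
    _ ≤ ‖A s₀‖ := hs₀max _ (hπmem s)
  set v : ℝ → Fib l → Fib l := fun s w => -(A s w) with hvdef
  have hv : ∀ s, LipschitzOnWith ‖A s₀‖₊ (v s) Set.univ := by
    intro s
    exact (((A s).lipschitz.weaken (hAbound s)).neg (α := Fib l)).lipschitzOnWith
  -- the curve `z = y - P∘y` satisfies `z' = v t z`, `z t₀ = 0`
  set z : ℝ → Fib l := fun s => y s - P (y s) with hzdef
  have hz' : ∀ s ∈ Set.Icc t₀ t₁, HasDerivAt z (v s (z s)) s := by
    intro s hs
    have hy's := hy' s hs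
    have hPy' : HasDerivAt (fun u => P (y u))
        (P (-(Cck (x s) (y s) (y s)))) s :=
      ((LinearMap.toContinuousLinearMap P).hasFDerivAt.comp_hasDerivAt s hy's)
    have := hy's.sub hPy'
    refine this.congr_deriv ?_
    have hπs := hπid s hs
    simp only [hvdef, hAapp, hπs, hzdef, Cck]
    simp only [map_add, map_neg, map_sub, hP]
    abel
  have hz0 : z t₀ = 0 := by
    obtain ⟨u, hu⟩ := hy0
    simp [hzdef, ← hu, hP]
  -- uniqueness of solutions: `z = 0` on `[t₀, t₁]`
  have hzero : Set.EqOn z (fun _ => (0 : Fib l)) (Set.Icc t₀ t₁) := by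
    apply ODE_solution_unique_of_mem_Icc_right (s := fun _ => Set.univ) (hv := fun s _ => hv s)
    · intro s hs
      exact ((hz' s hs).continuousAt).continuousWithinAt
    · intro s hs
      exact (hz' s (Set.Ico_subset_Icc_self hs)).hasDerivWithinAt
    · intro s _; trivial
    · exact continuousOn_const
    · intro s hs
      have : v s 0 = 0 := by simp [hvdef]
      rw [this]
      exact (hasDerivAt_const s (0 : Fib l)).hasDerivWithinAt
    · intro s _; trivial
    · exact hz0
  have := hzero ht
  refine ⟨y t, ?_⟩
  have : y t - P (y t) = 0 := this
  linear_combination (norm := module) -this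
end
end
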